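/- Choice conjunction preserves the static property: if constant games A₁, …, Aₙ are static, then so is A₁ ⊓ … ⊓ Aₙ, where the choice conjunction is the game in which the only legal first move is a ⊥-labeled move i ∈ {1,…,n}, after which the game continues as Aᵢ; the empty run is won by ⊤, and a run ⟨⊥i, Γ⟩ is won by the winner of Γ in Aᵢ. -/

import Mathlib

/-!
A `p`-delay only moves `p`'s labmoves to the right past `¬p`'s, so a run and its delay either
start with the same labmove, and their tails are again a `p`-delay of one another, which is
where the static components take over; or the run starts with a `p`-move and the delay with a
`¬p`-move. In the latter case a win of `p` forces `p = ⊥`, since a run opened by ⊤ is lost by ⊤,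
and the delay, opened by ⊤, is lost by ⊤ as well.
-/

/-- A run: a finite sequence of labmoves; a labmove is a pair (player, move),
player `true` = ⊤ (machine), `false` = ⊥ (environment). -/
abbrev Run (M : Type*) := List (Bool × M)

/-- Indices (0-based positions) of the `q`-labeled moves of a run. -/
def labelIndices {M : Type*} (Γ : Run M) (q : Bool) : List ℕ :=
  Γ.zipIdx.filterMap fun x => if x.1.1 = q then some x.2 else none

/-- In `Γ`, the `k`-th `(¬p)`-labeled move occurs strictly earlier (to the
left) than the `n`-th `p`-labeled move (`k`, `n` are 0-based here). -/
def kthPrecedes {M : Type*} (Γ : Run M) (p : Bool) (k n : ℕ) : Prop :=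
  ∃ i j, (labelIndices Γ (!p))[k]? = some i ∧ (labelIndices Γ p)[n]? = some j ∧ i < j

/-- `IsDelay p Γ Δ` says that `Δ` is a `p`-delay of `Γ`: (1) same subsequence
of `p`-labeled moves and same subsequence of `(¬p)`-labeled moves; (2) whenever
the `k`-th `(¬p)`-labeled move precedes the `n`-th `p`-labeled move in `Γ`, the
same holds in `Δ`. -/
def IsDelay {M : Type*} (p : Bool) (Γ Δ : Run M) : Prop :=
  Δ.filter (fun x => x.1 == p) = Γ.filter (fun x => x.1 == p) ∧
  Δ.filter (fun x => x.1 == !p) = Γ.filter (fun x => x.1 == !p) ∧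
  ∀ k n, kthPrecedes Γ p k n → kthPrecedes Δ p k n

/-- A constant game: a pair (Lr, Wn) of a set of (legal) runs and a function
assigning to each run a winner (`true` = ⊤, `false` = ⊥). -/
structure ConstGame (M : Type*) where
  Lr : Set (Run M)
  Wn : Run M → Bool

/-- A constant game is static iff for every player `p` and all runs Γ, Δ such
that Δ is a `p`-delay of Γ: if Γ is won by `p`, then so is Δ. -/
def ConstGame.Static {M : Type*} (A : ConstGame M) : Prop :=
  ∀ (p : Bool) (Γ Δ : Run M), IsDelay p Γ Δ → A.Wn Γ = p → A.Wn Δ = p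

/-- `Γ` is a `p`-illegal run of `A`: the last move of the shortest illegal
initial segment of `Γ` is `p`-labeled. -/
def PIllegal {M : Type*} (A : ConstGame M) (p : Bool) (Γ : Run M) : Prop :=
  ∃ (Φ : Run M) (m : M),
    Φ ++ [(p, m)] <+: Γ ∧ Φ ∈ A.Lr ∧ Φ ++ [(p, m)] ∉ A.Lr

/-- Choice conjunction A₁ ⊓ … ⊓ Aₙ of constant games (indexed by `Fin n`, with
the index moves encoded into the move type by an injection `enc`): the only
legal first move is a ⊥-labeled move `enc i`, after which the game continues as
`A i`; the empty run is won by ⊤; a run ⟨⊥(enc i), Γ⟩ is won by the winner of Γ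
in `A i`; any other (illegal) run is lost by the player who made its first
(offending) move. -/
noncomputable def cConj {M : Type*} {n : ℕ} (enc : Fin n → M)
    (A : Fin n → ConstGame M) : ConstGame M where
  Lr := {Γ | Γ = [] ∨ ∃ (i : Fin n) (Δ : Run M), Δ ∈ (A i).Lr ∧ Γ = (false, enc i) :: Δ}
  Wn := fun Γ =>
    match Γ with
    | [] => true
    | (true, _) :: _ => false
    | (false, m) :: Δ =>
      haveI := Classical.propDecidable (∃ i, enc i = m)
      if h : ∃ i, enc i = m then (A (Classical.choose h)).Wn Δ else true

section Delay

variable {M : Type*}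

lemma labelIndices_cons (b : Bool) (m : M) (Γ : Run M) (q : Bool) :
    labelIndices ((b, m) :: Γ) q
      = (if b = q then [0] else []) ++ (labelIndices Γ q).map (· + 1) := by
  rw [labelIndices, List.zipIdx_cons', List.filterMap_cons, List.filterMap_map, labelIndices,
    List.map_filterMap]
  by_cases h : b = q
  · simp only [h, if_true]
    congr 2
    funext ⟨⟨c, _⟩, i⟩
    by_cases hc : c = q <;> simp [hc]
  · simp only [h, if_false]
    congr 1
    funext ⟨⟨c, _⟩, i⟩
    by_cases hc : c = q <;> simp [hc]

lemma length_labelIndices (Γ : Run M) (q : Bool) :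
    (labelIndices Γ q).length = (Γ.filter (·.1 == q)).length := by
  induction Γ with
  | nil => rfl
  | cons a Γ ih =>
    rw [labelIndices_cons, List.filter_cons]
    by_cases h : a.1 = q <;> simp [h, ih]

lemma exists_getElem?_map_succ_lt_iff {l₁ l₂ : List ℕ} {k n : ℕ} :
    (∃ i j, (l₁.map (· + 1))[k]? = some i ∧ (l₂.map (· + 1))[n]? = some j ∧ i < j) ↔
      ∃ i j, l₁[k]? = some i ∧ l₂[n]? = some j ∧ i < j := by
  simp only [List.getElem?_map, Option.map_eq_some_iff]
  constructor
  · rintro ⟨_, _, ⟨i, hi, rfl⟩, ⟨j, hj, rfl⟩, hij⟩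
    exact ⟨i, j, hi, hj, by omega⟩
  · rintro ⟨i, j, hi, hj, hij⟩
    exact ⟨i + 1, j + 1, ⟨i, hi, rfl⟩, ⟨j, hj, rfl⟩, by omega⟩

lemma kthPrecedes_cons_self_succ_iff (p : Bool) (m : M) (Γ : Run M) (k n : ℕ) :
    kthPrecedes ((p, m) :: Γ) p k (n + 1) ↔ kthPrecedes Γ p k n := by
  simpa only [kthPrecedes, labelIndices_cons, Bool.eq_not_self, if_true, if_false,
    List.nil_append, List.singleton_append, List.getElem?_cons_succ]
    using exists_getElem?_map_succ_lt_iff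

lemma kthPrecedes_cons_not_succ_iff (p : Bool) (m : M) (Γ : Run M) (k n : ℕ) :
    kthPrecedes ((!p, m) :: Γ) p (k + 1) n ↔ kthPrecedes Γ p k n := by
  simpa only [kthPrecedes, labelIndices_cons, Bool.not_eq_self, if_true, if_false,
    List.nil_append, List.singleton_append, List.getElem?_cons_succ]
    using exists_getElem?_map_succ_lt_iff

namespace IsDelay

variable {p : Bool} {Γ Δ : Run M}

lemma length_eq (h : IsDelay p Γ Δ) : Δ.length = Γ.length := by
  obtain ⟨hp, hnp, -⟩ := h
  have hneg : (fun x : Bool × M => x.1 == !p) = fun x => !(x.1 == p) := by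
    funext ⟨b, _⟩
    cases b <;> cases p <;> rfl
  rw [hneg] at hnp
  rw [List.length_eq_length_filter_add (l := Δ) (·.1 == p),
    List.length_eq_length_filter_add (l := Γ) (·.1 == p), hp, hnp]

lemma cons_cons {b : Bool} {m m' : M} (h : IsDelay p ((b, m) :: Γ) ((b, m') :: Δ)) :
    m' = m ∧ IsDelay p Γ Δ := by
  obtain ⟨hp, hnp, hprec⟩ := h
  rw [List.filter_cons, List.filter_cons] at hp hnp
  rcases Bool.eq_or_eq_not b p with rfl | rfl
  · simp only [beq_self_eq_true, if_true, List.cons.injEq, Prod.mk.injEq, true_and] at hp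
    simp only [Bool.beq_not_self] at hnp
    refine ⟨hp.1, hp.2, hnp, fun k n hkn => ?_⟩
    exact (kthPrecedes_cons_self_succ_iff b m' Δ k n).1
      (hprec k (n + 1) ((kthPrecedes_cons_self_succ_iff b m Γ k n).2 hkn))
  · simp only [beq_self_eq_true, if_true, List.cons.injEq, Prod.mk.injEq, true_and] at hnp
    simp only [Bool.not_beq_self] at hp
    refine ⟨hnp.1, hp, hnp.2, fun k n hkn => ?_⟩
    exact (kthPrecedes_cons_not_succ_iff p m' Δ k n).1
      (hprec (k + 1) n ((kthPrecedes_cons_not_succ_iff p m Γ k n).2 hkn))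

lemma fst_eq_of_cons_self {b : Bool} {m m' : M} (h : IsDelay p ((b, m) :: Γ) ((p, m') :: Δ)) :
    b = p := by
  obtain ⟨hp, -, hprec⟩ := h
  by_contra hb
  obtain rfl : b = !p := by cases b <;> cases p <;> simp_all
  have hΓp : 0 < (labelIndices Γ p).length := by
    rw [length_labelIndices, ← List.filter_cons_of_neg (a := (!p, m)) (by simp), ← hp]
    simp
  obtain ⟨i, j, hi, hj, hij⟩ := hprec 0 0
    ⟨0, (labelIndices Γ p)[0] + 1, by simp [labelIndices_cons], by simp [labelIndices_cons],
      by omega⟩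
  simp only [labelIndices_cons, if_true, List.singleton_append, List.getElem?_cons_zero,
    Option.some.injEq] at hi hj
  omega

end IsDelay
end Delay

section ChoiceConjunction

variable {M : Type*} {n : ℕ} (enc : Fin n → M) (A : Fin n → ConstGame M)

lemma cConj_wn_true_cons (m : M) (Γ : Run M) : (cConj enc A).Wn ((true, m) :: Γ) = false := rfl

lemma cConj_wn_cons_of_forall {p b : Bool} {m : M} {Γ Δ : Run M}
    (hA : ∀ i, (A i).Wn Γ = p → (A i).Wn Δ = p) (hw : (cConj enc A).Wn ((b, m) :: Γ) = p) :
    (cConj enc A).Wn ((b, m) :: Δ) = p := by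
  cases b
  · by_cases hm : ∃ i, enc i = m
    · simpa [cConj, hm] using hA _ (by simpa [cConj, hm] using hw)
    · simpa [cConj, hm] using hw
  · exact hw

lemma cConj_wn_cons_of_isDelay_of_fst_ne {p b b' : Bool} {m m' : M} {Γ Δ : Run M}
    (hd : IsDelay p ((b, m) :: Γ) ((b', m') :: Δ)) (hb : b' ≠ b)
    (hw : (cConj enc A).Wn ((b, m) :: Γ) = p) : (cConj enc A).Wn ((b', m') :: Δ) = p := by
  have hb'p : b' ≠ p := by
    rintro rfl
    exact hb hd.fst_eq_of_cons_self.symm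
  obtain rfl : b = p := by cases b <;> cases b' <;> cases p <;> simp_all
  cases b
  · obtain rfl : b' = true := by simpa using hb
    exact cConj_wn_true_cons enc A m' Δ
  · exact absurd hw (by simp [cConj_wn_true_cons])

end ChoiceConjunction

theorem cConj_static_general {M : Type*} {n : ℕ} (enc : Fin n → M)
    (A : Fin n → ConstGame M)
    (hst : ∀ i, (A i).Static) :
    (cConj enc A).Static := by
  intro p Γ Δ hd hw
  rcases Γ with _ | ⟨⟨b, m⟩, Γ⟩ <;> rcases Δ with _ | ⟨⟨b', m'⟩, Δ⟩
  · exact hw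
  · simpa using hd.length_eq
  · simpa using hd.length_eq
  · by_cases hb : b' = b
    · subst hb
      obtain ⟨rfl, htail⟩ := hd.cons_cons
      exact cConj_wn_cons_of_forall enc A (fun i => hst i p Γ Δ htail) hw
    · exact cConj_wn_cons_of_isDelay_of_fst_ne enc A hd hb hw

/-- Choice conjunction preserves the static property: if the constant games
`A 0, …, A (n-1)` are static, then so is their choice conjunction. -/
theorem cConj_static {M : Type*} {n : ℕ} (enc : Fin n → M)
    (henc : Function.Injective enc) (A : Fin n → ConstGame M)
    (hcl : ∀ i, ∀ Γ : Run M, Γ ∈ (A i).Lr ↔ ∀ Φ : Run M, Φ ≠ [] → Φ <+: Γ → Φ ∈ (A i).Lr)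
    (hil : ∀ i (p : Bool) (Γ : Run M), PIllegal (A i) p Γ → (A i).Wn Γ ≠ p)
    (hst : ∀ i, (A i).Static) :
    (cConj enc A).Static :=
  cConj_static_general enc A hst
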